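/- Symmetry of the multi-sum expression in Theorem 2 for the case n = 2, m arbitrary, stated via the intermediate form (Theorem 2): for odd positive integers w₁, w₂, an integer x, and all m ≥ 0, ([w₁]_q^m/(1+q^{w₁}))·∑_{k=0}^{w₁-1} (-1)^k q^{w₂k} ℰ_{m,q^{w₁}}(w₂x + w₂k/w₁) = ([w₂]_q^m/(1+q^{w₂}))·∑_{k=0}^{w₂-1} (-1)^k q^{w₁k} ℰ_{m,q^{w₂}}(w₁x + w₁k/w₂), where ℰ_{m,q}(t) for rational t is defined by ℰ_{m,q}(t) = ∑_{l=0}^{m} C(m,l) q^{lt} ℰ_{l,q} [t]_q^{m-l} interpreted in a field containing ℚ(q^{1/(w₁w₂)}). -/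

import Mathlib

/-!
Solving the Carlitz recursion gives the closed form
`ℰ_{n,P} = (1+P)/(1-P)^n ∑_j C(n,j) (-1)^j / (1+P^{j+1})`, and a binomial-transform computation
turns it into `ℰ_{m,P}(t) = (1+P)/(1-P)^m ∑_j C(m,j) (-1)^j P^{jt} / (1+P^{j+1})`.
With `P = q^{w₁}` and `P^t = q^{w₁w₂x} q^{w₂k}`, the alternating sum over `k` becomes, for odd `w₁`,
the geometric sum `∑_k (-q^{w₂(j+1)})^k = (1+q^{w₁w₂(j+1)})/(1+q^{w₂(j+1)})`, so each side equals
`(1-q)^{-m} ∑_j C(m,j) (-1)^j q^{w₁w₂xj} (1+q^{w₁w₂(j+1)}) / ((1+q^{w₁(j+1)})(1+q^{w₂(j+1)}))`,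
which is symmetric in `w₁` and `w₂`.
-/

open Finset

/-- The Carlitz q-Euler recurrence with base `Q`. -/
def CarlitzRec (Q : RatFunc ℚ) (E : ℕ → RatFunc ℚ) : Prop :=
  ∀ n : ℕ,
    Q * (∑ l ∈ range (n + 1), (n.choose l : RatFunc ℚ) * Q ^ l * E l) + E n =
      if n = 0 then 1 + Q else 0

/-- The q-Euler polynomial `ℰ_{m,q'}(t)` at a rational argument `t`, where the
base is `q' = X^d` (`X` being the generator of the field `ℚ(Q)` of the context,
in which `q = X^{w₁w₂}`), and where `a = d·t ∈ ℤ`, so that `(q')^{lt} = X^{la}`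
and `[t]_{q'} = (1 - X^a)/(1 - X^d)`:
`ℰ_{m,q'}(t) = ∑_{l=0}^m C(m,l) (q')^{lt} ℰ_{l,q'} [t]_{q'}^{m-l}`. -/
noncomputable def qEulerPolyScaled (E : ℕ → RatFunc ℚ) (d : ℕ) (m : ℕ) (a : ℤ) :
    RatFunc ℚ :=
  ∑ l ∈ range (m + 1),
    (m.choose l : RatFunc ℚ) * RatFunc.X ^ ((l : ℤ) * a) * E l *
      ((1 - RatFunc.X ^ a) / (1 - RatFunc.X ^ (d : ℤ))) ^ (m - l)

theorem sum_range_choose_mul_choose_mul_pow {R : Type*} [CommRing R] {n j : ℕ} (hj : j ≤ n)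
    (u v : R) :
    ∑ l ∈ range (n + 1), (n.choose l : R) * l.choose j * u ^ l * v ^ (n - l) =
      n.choose j * u ^ j * (u + v) ^ (n - j) := by
  rw [← sum_range_add_sum_Ico _ (by omega : j ≤ n + 1),
    sum_eq_zero fun l hl => by rw [Nat.choose_eq_zero_of_lt (mem_range.1 hl)]; simp,
    zero_add, sum_Ico_eq_sum_range, show n + 1 - j = n - j + 1 by omega, add_pow, mul_sum]
  refine sum_congr rfl fun i hi => ?_
  have hi : i ≤ n - j := Nat.lt_succ_iff.1 (mem_range.1 hi)
  have hchoose : (n.choose (j + i) : R) * (j + i).choose j = n.choose j * (n - j).choose i := by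
    rw [← Nat.cast_mul, ← Nat.cast_mul, Nat.choose_mul (by omega), Nat.add_sub_cancel_left]
  rw [hchoose, pow_add, show n - (j + i) = n - j - i by omega]
  ring

theorem sum_range_choose_mul_pow_mul_sum_choose {R : Type*} [CommRing R] (F : ℕ → R) (u v : R)
    (n : ℕ) :
    ∑ l ∈ range (n + 1), (n.choose l : R) * u ^ l * v ^ (n - l) *
        ∑ j ∈ range (l + 1), (l.choose j : R) * F j =
      ∑ j ∈ range (n + 1), (n.choose j : R) * F j * u ^ j * (u + v) ^ (n - j) := by
  have hextend : ∀ l ∈ range (n + 1), ∑ j ∈ range (l + 1), (l.choose j : R) * F j =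
      ∑ j ∈ range (n + 1), (l.choose j : R) * F j := fun l hl =>
    sum_subset (range_subset_range.2 (by simpa using hl)) fun j _ hj => by
      rw [Nat.choose_eq_zero_of_lt (by simpa using hj), Nat.cast_zero, zero_mul]
  rw [sum_congr rfl fun l hl => by rw [hextend l hl, mul_sum], sum_comm]
  refine sum_congr rfl fun j hj => ?_
  rw [show (n.choose j : R) * F j * u ^ j * (u + v) ^ (n - j) =
      n.choose j * u ^ j * (u + v) ^ (n - j) * F j by ring,
    ← sum_range_choose_mul_choose_mul_pow (Nat.lt_succ_iff.1 (mem_range.1 hj)), sum_mul]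
  exact sum_congr rfl fun l _ => by ring

theorem one_sub_pow_ne_zero_of_not_isOfFinOrder {R : Type*} [Ring R] {q : R}
    (hq : ¬IsOfFinOrder q) {n : ℕ} (hn : n ≠ 0) : 1 - q ^ n ≠ 0 :=
  sub_ne_zero.2 fun h => hq (isOfFinOrder_iff_pow_eq_one.2 ⟨n, Nat.pos_of_ne_zero hn, h.symm⟩)

theorem one_add_pow_ne_zero_of_not_isOfFinOrder {R : Type*} [Ring R] {q : R}
    (hq : ¬IsOfFinOrder q) {n : ℕ} (hn : n ≠ 0) : 1 + q ^ n ≠ 0 := fun h =>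
  hq (isOfFinOrder_iff_pow_eq_one.2
    ⟨n * 2, by omega, by rw [pow_mul, ← neg_eq_of_add_eq_zero_right h, neg_one_sq]⟩)

section QEuler

variable {K : Type*} [Field K]

/-- `ℰ_{m,P}(t)` as a function of `y = P^t`, so that `[t]_P = (1 - y)/(1 - P)`. -/
def qEulerPoly (P : K) (E : ℕ → K) (m : ℕ) (y : K) : K :=
  ∑ l ∈ range (m + 1), (m.choose l : K) * y ^ l * E l * ((1 - y) / (1 - P)) ^ (m - l)

def carlitzQEuler (P : K) (n : ℕ) : K :=
  (1 + P) / (1 - P) ^ n * ∑ j ∈ range (n + 1), (n.choose j : K) * (-1) ^ j / (1 + P ^ (j + 1))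

theorem qEulerPoly_carlitzQEuler (P : K) (m : ℕ) (y : K) :
    qEulerPoly P (carlitzQEuler P) m y =
      (1 + P) / (1 - P) ^ m *
        ∑ j ∈ range (m + 1), (m.choose j : K) * (-1) ^ j / (1 + P ^ (j + 1)) * y ^ j := by
  set F : ℕ → K := fun j => (-1) ^ j / (1 + P ^ (j + 1))
  have hterm : ∀ l, (m.choose l : K) * y ^ l * carlitzQEuler P l * ((1 - y) / (1 - P)) ^ (m - l) =
      (1 + P) * ((m.choose l : K) * (y / (1 - P)) ^ l * ((1 - y) / (1 - P)) ^ (m - l) *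
        ∑ j ∈ range (l + 1), (l.choose j : K) * F j) := fun l => by
    simp only [carlitzQEuler, F, mul_div_assoc, div_pow]
    ring
  have hpow : ∀ j ∈ range (m + 1), (y / (1 - P)) ^ j * (y / (1 - P) + (1 - y) / (1 - P)) ^ (m - j) =
      y ^ j / (1 - P) ^ m := fun j hj => by
    rw [← add_div, add_sub_cancel, div_pow, one_div_pow, div_mul_div_comm, mul_one, ← pow_add,
      Nat.add_sub_cancel' (Nat.lt_succ_iff.1 (mem_range.1 hj))]
  rw [qEulerPoly, sum_congr rfl fun l _ => hterm l, ← mul_sum,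
    sum_range_choose_mul_pow_mul_sum_choose, mul_sum, mul_sum]
  refine sum_congr rfl fun j hj => ?_
  rw [mul_assoc (_ * F j), hpow j hj]
  simp only [F]
  ring

theorem geom_sum_neg_of_odd {w : ℕ} (hw : Odd w) {t : K} (ht : 1 + t ≠ 0) :
    ∑ k ∈ range w, (-t) ^ k = (1 + t ^ w) / (1 + t) := by
  have ht' : -t ≠ 1 := fun h => ht (by rw [← h, neg_add_cancel])
  rw [geom_sum_eq ht', hw.neg_pow, ← neg_add', ← neg_add', neg_div_neg_eq, add_comm, add_comm t]

theorem sum_neg_one_pow_mul_qEulerPoly_carlitzQEuler {w : ℕ} (hw : Odd w) (P t z : K)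
    (ht : ∀ j : ℕ, 1 + t ^ (j + 1) ≠ 0) (m : ℕ) :
    ∑ k ∈ range w, (-1) ^ k * t ^ k * qEulerPoly P (carlitzQEuler P) m (z * t ^ k) =
      (1 + P) / (1 - P) ^ m * ∑ j ∈ range (m + 1),
        (m.choose j : K) * (-1) ^ j / (1 + P ^ (j + 1)) * z ^ j *
          ((1 + (t ^ (j + 1)) ^ w) / (1 + t ^ (j + 1))) := by
  simp_rw [qEulerPoly_carlitzQEuler, mul_sum]
  rw [sum_comm]
  refine sum_congr rfl fun j _ => ?_
  rw [← geom_sum_neg_of_odd hw (ht j), mul_sum, mul_sum]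
  refine sum_congr rfl fun k _ => ?_
  ring

/-- `([w]_q^m / (1 + q^w)) ∑_{k<w} (-1)^k q^{vk} ℰ_{m,q^w}(v x + v k / w)`, with `z = q^{wvx}`. -/
def twistedQEulerSum (q : K) (w v : ℕ) (z : K) (m : ℕ) : K :=
  ((1 - q ^ w) / (1 - q)) ^ m / (1 + q ^ w) *
    ∑ k ∈ range w, (-1) ^ k * (q ^ v) ^ k *
      qEulerPoly (q ^ w) (carlitzQEuler (q ^ w)) m (z * (q ^ v) ^ k)

theorem twistedQEulerSum_eq {q : K} (hq : ¬IsOfFinOrder q) {w v : ℕ} (hw : Odd w) (hv : v ≠ 0)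
    (z : K) (m : ℕ) :
    twistedQEulerSum q w v z m =
      (∑ j ∈ range (m + 1), (m.choose j : K) * (-1) ^ j * z ^ j * (1 + (q ^ (w * v)) ^ (j + 1)) /
        ((1 + (q ^ w) ^ (j + 1)) * (1 + (q ^ v) ^ (j + 1)))) / (1 - q) ^ m := by
  have hsub : 1 - q ^ w ≠ 0 := one_sub_pow_ne_zero_of_not_isOfFinOrder hq hw.pos.ne'
  have hadd : 1 + q ^ w ≠ 0 := one_add_pow_ne_zero_of_not_isOfFinOrder hq hw.pos.ne'
  have hv' : ∀ j : ℕ, 1 + (q ^ v) ^ (j + 1) ≠ 0 := fun j => by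
    rw [← pow_mul]
    exact one_add_pow_ne_zero_of_not_isOfFinOrder hq (mul_ne_zero hv j.succ_ne_zero)
  have hfactor : ((1 - q ^ w) / (1 - q)) ^ m / (1 + q ^ w) * ((1 + q ^ w) / (1 - q ^ w) ^ m) =
      1 / (1 - q) ^ m := by
    rw [div_pow]
    field_simp
  rw [twistedQEulerSum, sum_neg_one_pow_mul_qEulerPoly_carlitzQEuler hw _ _ _ hv', ← mul_assoc,
    hfactor, one_div_mul_eq_div]
  congr 1
  refine sum_congr rfl fun j _ => ?_
  rw [div_mul_eq_div_div]
  ring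

theorem twistedQEulerSum_comm {q : K} (hq : ¬IsOfFinOrder q) {w v : ℕ} (hw : Odd w) (hv : Odd v)
    (z : K) (m : ℕ) : twistedQEulerSum q w v z m = twistedQEulerSum q v w z m := by
  rw [twistedQEulerSum_eq hq hw hv.pos.ne', twistedQEulerSum_eq hq hv hw.pos.ne', mul_comm v w]
  congr 1
  refine sum_congr rfl fun j _ => ?_
  ring

end QEuler

theorem carlitzRec_carlitzQEuler {P : RatFunc ℚ} (hP : 1 - P ≠ 0)
    (hP' : ∀ j : ℕ, 1 + P ^ (j + 1) ≠ 0) : CarlitzRec P (carlitzQEuler P) := by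
  intro n
  have hsum : ∑ l ∈ range (n + 1), (n.choose l : RatFunc ℚ) * P ^ l * carlitzQEuler P l =
      qEulerPoly P (carlitzQEuler P) n P := by
    simp only [qEulerPoly, div_self hP, one_pow, mul_one]
  have halt : ∑ j ∈ range (n + 1), (n.choose j : RatFunc ℚ) * (-1) ^ j =
      if n = 0 then 1 else 0 := by
    have h := congrArg (Int.cast : ℤ → RatFunc ℚ) (Int.alternating_sum_range_choose (n := n))
    push_cast at h
    simpa only [mul_comm] using h
  have hterm : ∀ j ∈ range (n + 1),
      P * ((n.choose j : RatFunc ℚ) * (-1) ^ j / (1 + P ^ (j + 1)) * P ^ j) +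
        (n.choose j : RatFunc ℚ) * (-1) ^ j / (1 + P ^ (j + 1)) =
      (n.choose j : RatFunc ℚ) * (-1) ^ j := fun j _ => by
    field_simp [hP' j]
    ring
  rw [hsum, qEulerPoly_carlitzQEuler, carlitzQEuler, mul_left_comm, ← mul_add, mul_sum,
    ← sum_add_distrib, sum_congr rfl hterm, halt]
  split_ifs with hn
  · simp [hn]
  · rw [mul_zero]

theorem CarlitzRec.unique {P : RatFunc ℚ} (hP : ∀ j : ℕ, 1 + P ^ (j + 1) ≠ 0)
    {E E' : ℕ → RatFunc ℚ} (hE : CarlitzRec P E) (hE' : CarlitzRec P E') : E = E' := by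
  funext n
  induction n using Nat.strong_induction_on with
  | _ n ih =>
    have h := (hE n).trans (hE' n).symm
    rw [sum_range_succ, sum_range_succ, sum_congr rfl fun l hl => by rw [ih l (mem_range.1 hl)],
      Nat.choose_self, Nat.cast_one, one_mul] at h
    refine mul_left_cancel₀ (hP n) ?_
    linear_combination h

theorem CarlitzRec.eq_carlitzQEuler {P : RatFunc ℚ} (hP : ¬IsOfFinOrder P) {E : ℕ → RatFunc ℚ}
    (hE : CarlitzRec P E) : E = carlitzQEuler P := by
  have hP₁ : 1 - P ≠ 0 := by simpa using one_sub_pow_ne_zero_of_not_isOfFinOrder hP one_ne_zero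
  have hP' : ∀ j : ℕ, 1 + P ^ (j + 1) ≠ 0 := fun j =>
    one_add_pow_ne_zero_of_not_isOfFinOrder hP j.succ_ne_zero
  exact hE.unique hP' (carlitzRec_carlitzQEuler hP₁ hP')

theorem RatFunc.not_isOfFinOrder_X {F : Type*} [Field F] :
    ¬IsOfFinOrder (RatFunc.X : RatFunc F) := by
  rw [isOfFinOrder_iff_pow_eq_one]
  rintro ⟨n, hn, h⟩
  rw [← RatFunc.algebraMap_X, ← map_pow, ← map_one (algebraMap (Polynomial F) (RatFunc F))] at h
  have := congrArg Polynomial.natDegree (RatFunc.algebraMap_injective F h)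
  rw [Polynomial.natDegree_X_pow, Polynomial.natDegree_one] at this
  omega

theorem qEulerPolyScaled_eq_qEulerPoly (E : ℕ → RatFunc ℚ) (d m : ℕ) (a : ℤ) :
    qEulerPolyScaled E d m a = qEulerPoly (RatFunc.X ^ d) E m (RatFunc.X ^ a) := by
  refine sum_congr rfl fun l _ => ?_
  rw [zpow_natCast, mul_comm (l : ℤ), zpow_mul, zpow_natCast]

/-- Phrased through exponent equations so that both sides of `symmetry_thm2_n2` are instances. -/
theorem qEulerPolyScaled_sum_eq_twistedQEulerSum {c w v d b : ℕ} {A B : ℤ}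
    (hq : ¬IsOfFinOrder (RatFunc.X ^ c : RatFunc ℚ)) (hw : w ≠ 0)
    (hd : d = c * w) (hb : b = c * v) (hB : B = b) {E : ℕ → RatFunc ℚ}
    (hE : CarlitzRec (RatFunc.X ^ d) E) (m : ℕ) :
    ((1 - RatFunc.X ^ d) / (1 - RatFunc.X ^ c)) ^ m / (1 + RatFunc.X ^ d) *
        ∑ k ∈ range w, (-1 : RatFunc ℚ) ^ k * RatFunc.X ^ (b * k) *
          qEulerPolyScaled E d m (A + B * k) =
      twistedQEulerSum (RatFunc.X ^ c) w v (RatFunc.X ^ A) m := by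
  subst hd hb hB
  rw [pow_mul] at hE ⊢
  rw [hE.eq_carlitzQEuler fun h => hq (h.of_pow hw), twistedQEulerSum]
  congr 1
  refine sum_congr rfl fun k _ => ?_
  rw [qEulerPolyScaled_eq_qEulerPoly, zpow_add₀ RatFunc.X_ne_zero, ← Nat.cast_mul, zpow_natCast]
  simp only [pow_mul]

theorem symmetry_thm2_n2_general (w₁ w₂ : ℕ) (hw₁ : Odd w₁) (hw₂ : Odd w₂) (x : ℤ) (m : ℕ)
    (E₁ E₂ : ℕ → RatFunc ℚ)
    (hE₁ : CarlitzRec (RatFunc.X ^ (w₁ ^ 2 * w₂)) E₁)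
    (hE₂ : CarlitzRec (RatFunc.X ^ (w₁ * w₂ ^ 2)) E₂) :
    ((1 - RatFunc.X ^ (w₁ ^ 2 * w₂)) / (1 - RatFunc.X ^ (w₁ * w₂))) ^ m /
          (1 + RatFunc.X ^ (w₁ ^ 2 * w₂)) *
        ∑ k ∈ range w₁,
          (-1 : RatFunc ℚ) ^ k * RatFunc.X ^ (w₁ * w₂ ^ 2 * k) *
            qEulerPolyScaled E₁ (w₁ ^ 2 * w₂) m
              ((w₁ : ℤ) ^ 2 * (w₂ : ℤ) ^ 2 * x + (w₁ : ℤ) * (w₂ : ℤ) ^ 2 * (k : ℤ)) =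
      ((1 - RatFunc.X ^ (w₁ * w₂ ^ 2)) / (1 - RatFunc.X ^ (w₁ * w₂))) ^ m /
          (1 + RatFunc.X ^ (w₁ * w₂ ^ 2)) *
        ∑ k ∈ range w₂,
          (-1 : RatFunc ℚ) ^ k * RatFunc.X ^ (w₁ ^ 2 * w₂ * k) *
            qEulerPolyScaled E₂ (w₁ * w₂ ^ 2) m
              ((w₁ : ℤ) ^ 2 * (w₂ : ℤ) ^ 2 * x + (w₁ : ℤ) ^ 2 * (w₂ : ℤ) * (k : ℤ)) := by
  have hq : ¬IsOfFinOrder (RatFunc.X ^ (w₁ * w₂) : RatFunc ℚ) := fun h =>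
    RatFunc.not_isOfFinOrder_X (h.of_pow (mul_ne_zero hw₁.pos.ne' hw₂.pos.ne'))
  calc _ = twistedQEulerSum (RatFunc.X ^ (w₁ * w₂)) w₁ w₂ (RatFunc.X ^ _) m :=
        qEulerPolyScaled_sum_eq_twistedQEulerSum hq hw₁.pos.ne' (by ring) (by ring)
          (by push_cast; ring) hE₁ m
    _ = twistedQEulerSum (RatFunc.X ^ (w₁ * w₂)) w₂ w₁ (RatFunc.X ^ _) m :=
        twistedQEulerSum_comm hq hw₁ hw₂ _ m
    _ = _ := (qEulerPolyScaled_sum_eq_twistedQEulerSum hq hw₂.pos.ne' (by ring) (by ring)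
          (by push_cast; ring) hE₂ m).symm

/-- Theorem 2 of the paper for `n = 2`, in `K = ℚ(Q)` with `q = Q^{w₁w₂}`
(`Q = RatFunc.X`): for odd positive `w₁, w₂`, an integer `x` and all `m ≥ 0`,
`([w₁]_q^m/(1+q^{w₁}))·∑_{k=0}^{w₁-1} (-1)^k q^{w₂k} ℰ_{m,q^{w₁}}(w₂x + w₂k/w₁)`
is symmetric in `(w₁, w₂)`.  Here `q^{w₁} = Q^{w₁²w₂}`, `q^{w₂k} = Q^{w₁w₂²k}`,
`[w₁]_q = (1-Q^{w₁²w₂})/(1-Q^{w₁w₂})`, and the argument of the polynomial with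
base `Q^{w₁²w₂}` is `t = w₂x + w₂k/w₁`, i.e. `a = d·t = w₁²w₂²x + w₁w₂²k`. -/
theorem symmetry_thm2_n2 (w₁ w₂ : ℕ) (hw₁ : Odd w₁) (hw₁0 : 0 < w₁)
    (hw₂ : Odd w₂) (hw₂0 : 0 < w₂) (x : ℤ) (m : ℕ)
    (E₁ E₂ : ℕ → RatFunc ℚ)
    (hE₁ : CarlitzRec (RatFunc.X ^ (w₁ ^ 2 * w₂)) E₁)
    (hE₂ : CarlitzRec (RatFunc.X ^ (w₁ * w₂ ^ 2)) E₂) :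
    ((1 - RatFunc.X ^ (w₁ ^ 2 * w₂)) / (1 - RatFunc.X ^ (w₁ * w₂))) ^ m /
          (1 + RatFunc.X ^ (w₁ ^ 2 * w₂)) *
        ∑ k ∈ range w₁,
          (-1 : RatFunc ℚ) ^ k * RatFunc.X ^ (w₁ * w₂ ^ 2 * k) *
            qEulerPolyScaled E₁ (w₁ ^ 2 * w₂) m
              ((w₁ : ℤ) ^ 2 * (w₂ : ℤ) ^ 2 * x + (w₁ : ℤ) * (w₂ : ℤ) ^ 2 * (k : ℤ)) =
      ((1 - RatFunc.X ^ (w₁ * w₂ ^ 2)) / (1 - RatFunc.X ^ (w₁ * w₂))) ^ m /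
          (1 + RatFunc.X ^ (w₁ * w₂ ^ 2)) *
        ∑ k ∈ range w₂,
          (-1 : RatFunc ℚ) ^ k * RatFunc.X ^ (w₁ ^ 2 * w₂ * k) *
            qEulerPolyScaled E₂ (w₁ * w₂ ^ 2) m
              ((w₁ : ℤ) ^ 2 * (w₂ : ℤ) ^ 2 * x + (w₁ : ℤ) ^ 2 * (w₂ : ℤ) * (k : ℤ)) :=
  symmetry_thm2_n2_general w₁ w₂ hw₁ hw₂ x m E₁ E₂ hE₁ hE₂
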